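/- Let R be a convergent and forward-closed term rewriting system. Then the right-reduced system R↓, obtained by normalizing all right-hand sides of rules of R, is convergent, generates the same congruence relation as R, and is forward-closed. -/

import Mathlib

/-! Basic first-order terms, positions, substitutions and rewriting. -/

inductive Term (F : Type) : Type
  | var : Nat → Term F
  | app : F → List (Term F) → Term F

namespace Term

def subst {F : Type} (σ : Nat → Term F) : Term F → Term F
  | var n => σ n
  | app f ts => app f (ts.attach.map fun ⟨t, _⟩ => t.subst σ)

def root {F : Type} : Term F → Option F
  | var _ => none
  | app f _ => some f

def label {F : Type} : Term F → F ⊕ Nat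
  | var n => Sum.inr n
  | app f _ => Sum.inl f

def IsVar {F : Type} : Term F → Prop
  | var _ => True
  | app _ _ => False

def varsL {F : Type} : Term F → List Nat
  | var n => [n]
  | app _ ts => (ts.attach.map fun ⟨t, _⟩ => t.varsL).flatten

end Term

abbrev Rule (F : Type) := Term F × Term F
abbrev TRS (F : Type) := Set (Rule F)

/-- `SubtermAt t p u` : the subterm of `t` at position `p` is `u`. -/
inductive SubtermAt {F : Type} : Term F → List Nat → Term F → Prop
  | here (t : Term F) : SubtermAt t [] t
  | there {f : F} {ts : List (Term F)} {i : Nat} {u : Term F} {p : List Nat} {v : Term F} :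
      ts[i]? = some u → SubtermAt u p v → SubtermAt (Term.app f ts) (i :: p) v

/-- `ReplaceAt t p v t'` : replacing the subterm of `t` at position `p` by `v` yields `t'`. -/
inductive ReplaceAt {F : Type} : Term F → List Nat → Term F → Term F → Prop
  | here (t u : Term F) : ReplaceAt t [] u u
  | there {f : F} {ts : List (Term F)} {i : Nat} {u : Term F} {p : List Nat} {v w : Term F} :
      ts[i]? = some u → ReplaceAt u p v w →
      ReplaceAt (Term.app f ts) (i :: p) v (Term.app f (ts.set i w))

variable {F : Type}

/-- One rewrite step using the given rule (at some position, with some substitution). -/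
def RuleStep (ρ : Rule F) (s t : Term F) : Prop :=
  ∃ (σ : Nat → Term F) (p : List Nat),
    SubtermAt s p (ρ.1.subst σ) ∧ ReplaceAt s p (ρ.2.subst σ) t

def OneStep (R : TRS F) (s t : Term F) : Prop := ∃ ρ ∈ R, RuleStep ρ s t

/-- A rewrite step at the root position. -/
def RootStep (R : TRS F) (s t : Term F) : Prop :=
  ∃ ρ ∈ R, ∃ σ : Nat → Term F, s = ρ.1.subst σ ∧ t = ρ.2.subst σ

def StarRW (R : TRS F) : Term F → Term F → Prop := Relation.ReflTransGen (OneStep R)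
def Plus (R : TRS F) : Term F → Term F → Prop := Relation.TransGen (OneStep R)
/-- Convertibility (the congruence / equational theory generated by `R`). -/
def Conv (R : TRS F) : Term F → Term F → Prop := Relation.EqvGen (OneStep R)
def Joinable (R : TRS F) (s t : Term F) : Prop := ∃ u, StarRW R s u ∧ StarRW R t u
def NormalForm (R : TRS F) (t : Term F) : Prop := ∀ u, ¬ OneStep R t u
/-- `t` is the `R`-normal form of `s`. -/
def NFof (R : TRS F) (s t : Term F) : Prop := StarRW R s t ∧ NormalForm R t
def Terminating (R : TRS F) : Prop := WellFounded (fun a b : Term F => OneStep R b a)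
def Confluent (R : TRS F) : Prop := ∀ s t u, StarRW R s t → StarRW R s u → Joinable R t u
def Convergent (R : TRS F) : Prop := Confluent R ∧ Terminating R

/-- every proper subterm is irreducible -/
def EpsIrreducible (R : TRS F) (t : Term F) : Prop :=
  ∀ p u, SubtermAt t p u → p ≠ [] → NormalForm R u

def InnermostRedex (R : TRS F) (t : Term F) : Prop :=
  EpsIrreducible R t ∧ ¬ NormalForm R t

/-- Forward-closed, via the one-step-to-normal-form characterization. -/
def FCclosed (R : TRS F) : Prop :=
  ∀ t, InnermostRedex R t → ∀ u, NFof R t u → OneStep R t u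

def Unifies (σ : Nat → Term F) (s t : Term F) : Prop := s.subst σ = t.subst σ

def IsMGU (σ : Nat → Term F) (s t : Term F) : Prop :=
  Unifies σ s t ∧ ∀ τ, Unifies τ s t → ∃ δ, ∀ x, τ x = (σ x).subst δ

def IsRenaming (ρ : Nat → Term F) : Prop :=
  ∃ f : Nat → Nat, Function.Injective f ∧ ∀ n, ρ n = Term.var (f n)

/-- Redundancy criterion for an oriented equation `e` whose right-hand side is
reachable from its left-hand side: some proper subterm of the lhs is reducible. -/
def Redundant (R : TRS F) (e : Rule F) : Prop :=
  ∃ p u, p ≠ ([] : List Nat) ∧ SubtermAt e.1 p u ∧ ¬ NormalForm R u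

/-- `R₁ ↝ R₂`: forward overlaps of rules of `R₂` (renamed apart) into
right-hand sides of rules of `R₁`, at non-variable positions, via an mgu. -/
def FStep (R₁ R₂ : TRS F) : TRS F :=
  { e | ∃ (l₁ r₁ l₂ r₂ : Term F) (ρ : Nat → Term F) (p : List Nat) (u : Term F)
          (σ : Nat → Term F) (r₁' : Term F),
      (l₁, r₁) ∈ R₁ ∧ (l₂, r₂) ∈ R₂ ∧ IsRenaming ρ ∧
      SubtermAt r₁ p u ∧ ¬ u.IsVar ∧ IsMGU σ u (l₂.subst ρ) ∧
      ReplaceAt r₁ p (r₂.subst ρ) r₁' ∧ e = (l₁.subst σ, r₁'.subst σ) }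

def FCiter (R : TRS F) : Nat → TRS F
  | 0 => R
  | k + 1 => FCiter R k ∪ { e | e ∈ FStep (FCiter R k) R ∧ ¬ Redundant (FCiter R k) e }

def FCinf (R : TRS F) : TRS F := ⋃ k, FCiter R k

/-- Forward-closed, via the forward-closure construction: `FC(R) = R`. -/
def ForwardClosedFC (R : TRS F) : Prop := FCinf R = R

/-- `RHS(R)`: `R` together with the conclusions of right-hand-side critical
pair inferences (second rule renamed apart). -/
def RHSset (R : TRS F) : TRS F :=
  R ∪ { e | ∃ (s t u₀ v₀ : Term F) (ρ σ : Nat → Term F), (s, t) ∈ R ∧ (u₀, v₀) ∈ R ∧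
        IsRenaming ρ ∧ IsMGU σ t (v₀.subst ρ) ∧
        s.subst σ ≠ (u₀.subst ρ).subst σ ∧ e = (s.subst σ, (u₀.subst ρ).subst σ) }

/-- the (unordered) pairs of root symbols of two equations coincide -/
def RootPairSimilar (e₁ e₂ : Rule F) : Prop :=
  (e₁.1.root = e₂.1.root ∧ e₁.2.root = e₂.2.root) ∨
  (e₁.1.root = e₂.2.root ∧ e₁.2.root = e₂.1.root)

def QuasiDet (E : TRS F) : Prop :=
  (∀ e ∈ E, ¬ e.1.IsVar ∧ ¬ e.2.IsVar) ∧
  (∀ e ∈ E, e.1.root ≠ e.2.root) ∧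
  (∀ e₁ ∈ E, ∀ e₂ ∈ E, e₁ ≠ e₂ → ¬ RootPairSimilar e₁ e₂)

def HasRootPairRepetition (E : TRS F) : Prop :=
  ∃ e₁ ∈ E, ∃ e₂ ∈ E, e₁ ≠ e₂ ∧ RootPairSimilar e₁ e₂

def VarPreserving (R : TRS F) : Prop :=
  ∀ e ∈ R, ∀ n, n ∈ Term.varsL e.1 ↔ n ∈ Term.varsL e.2

def RightReduced (R : TRS F) : Prop := ∀ e ∈ R, NormalForm R e.2

def AlmostLeftReduced (R : TRS F) : Prop :=
  ¬ ∃ (l₁ r₁ l₂ r₂ : Term F) (p : List Nat) (u : Term F) (σ : Nat → Term F),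
      (l₁, r₁) ∈ R ∧ (l₂, r₂) ∈ R ∧ p ≠ [] ∧ SubtermAt l₁ p u ∧ u = l₂.subst σ

def NonSubtermCollapsing (R : TRS F) : Prop :=
  ¬ ∃ (t u : Term F) (p : List Nat), p ≠ [] ∧ SubtermAt u p t ∧ Conv R t u

structure LMSystem (R : TRS F) : Prop where
  convergent : Convergent R
  almostLeftReduced : AlmostLeftReduced R
  rightReduced : RightReduced R
  nonCollapsing : NonSubtermCollapsing R
  forwardClosed : FCclosed R
  quasiDet : QuasiDet (RHSset R)

/-- the symbol (function symbol or variable) of a term at a position, if defined -/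
def labelAt {F : Type} : List Nat → Term F → Option (F ⊕ Nat)
  | [], t => some t.label
  | i :: p, Term.app _ ts => (ts[i]?).bind (labelAt p)
  | _ :: _, Term.var _ => none

/-- outermost distinguishing position -/
def ODP (s t : Term F) (p : List Nat) : Prop :=
  (labelAt p s ≠ none ∨ labelAt p t ≠ none) ∧
  labelAt p s ≠ labelAt p t ∧
  ∀ q, q <+: p → q ≠ p → labelAt q s = labelAt q t

/-!
Every rule `l → r↓` of `R↓` is simulated by the `R`-reduction `l → r →* r↓`, so `R↓ ⊆ →⁺_R`:
termination is inherited, and conversely every `R`-redex is an `R↓`-redex, so the two systems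
have the same normal forms. Confluence of `R↓` and equality of the congruences follow because
both systems compute the same unique normal forms. For forward closure, the single `R`-step
`t → t↓` provided by forward closure of `R` uses a rule `l → r` whose instance `rσ` sits inside
the normal form `t↓`; hence `rσ` is already normal, `rσ = r↓σ`, and the step is an `R↓`-step.
-/

section Positions

@[induction_eliminator]
theorem Term.ind {P : Term F → Prop} (var : ∀ n, P (.var n))
    (app : ∀ f ts, (∀ t ∈ ts, P t) → P (.app f ts)) : ∀ t, P t
  | .var n => var n
  | .app f ts => app f ts fun t _ => Term.ind var app t
termination_by t => sizeOf t
decreasing_by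
  have := List.sizeOf_lt_of_mem ‹t ∈ ts›
  simp_wf
  omega

theorem Term.subst_app (σ : Nat → Term F) (f : F) (ts : List (Term F)) :
    (Term.app f ts).subst σ = .app f (ts.map (Term.subst σ)) := by
  simp [Term.subst]

theorem Term.subst_subst (σ τ : Nat → Term F) (t : Term F) :
    (t.subst τ).subst σ = t.subst fun n => (τ n).subst σ := by
  induction t with
  | var n => simp [Term.subst]
  | app f ts ih =>
    simp only [Term.subst_app, List.map_map, Term.app.injEq, true_and]
    exact List.map_congr_left fun t ht => ih t ht

theorem SubtermAt.subst {s u : Term F} {p : List Nat} (h : SubtermAt s p u)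
    (σ : Nat → Term F) : SubtermAt (s.subst σ) p (u.subst σ) := by
  induction h with
  | here => exact .here _
  | there hget _ ih =>
    rw [Term.subst_app]
    exact .there (by simp [hget]) ih

theorem ReplaceAt.subst {s v t : Term F} {p : List Nat} (h : ReplaceAt s p v t)
    (σ : Nat → Term F) : ReplaceAt (s.subst σ) p (v.subst σ) (t.subst σ) := by
  induction h with
  | here => exact .here _ _
  | there hget _ ih =>
    rw [Term.subst_app, Term.subst_app, List.map_set]
    exact .there (by simp [hget]) ih

theorem SubtermAt.trans {s u v : Term F} {p q : List Nat} (h₁ : SubtermAt s p u)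
    (h₂ : SubtermAt u q v) : SubtermAt s (p ++ q) v := by
  induction h₁ with
  | here => exact h₂
  | there hget _ ih => exact .there hget (ih h₂)

theorem ReplaceAt.subtermAt {s v t : Term F} {p : List Nat} (h : ReplaceAt s p v t) :
    SubtermAt t p v := by
  induction h with
  | here => exact .here _
  | there hget _ ih => exact .there (by simp [List.getElem?_set_self', hget]) ih

theorem ReplaceAt.replaceAt_of_replaceAt {s u s' v t : Term F} {p : List Nat}
    (h₁ : ReplaceAt s p u s') (h₂ : ReplaceAt s p v t) : ReplaceAt s' p v t := by
  induction h₁ generalizing t with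
  | here => cases h₂; exact .here _ _
  | @there f ts i a p' u₀ w hget _ ih =>
    cases h₂ with
    | there hget' hr' =>
      obtain rfl := Option.some.inj (hget.symm.trans hget')
      have hset : (ts.set i w)[i]? = some w := by simp [List.getElem?_set_self', hget]
      simpa [List.set_set] using ReplaceAt.there (f := f) hset (ih hr')

theorem ReplaceAt.unique {s v t₁ t₂ : Term F} {p : List Nat} (h₁ : ReplaceAt s p v t₁)
    (h₂ : ReplaceAt s p v t₂) : t₁ = t₂ := by
  induction h₁ generalizing t₂ with
  | here => cases h₂; rfl
  | there hget _ ih =>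
    cases h₂ with
    | there hget' hr' =>
      obtain rfl := Option.some.inj (hget.symm.trans hget')
      rw [ih hr']

theorem SubtermAt.replaceAt_self {s u : Term F} {p : List Nat} (h : SubtermAt s p u) :
    ReplaceAt s p u s := by
  induction h with
  | here => exact .here _ _
  | @there f ts i a _ _ hget _ ih =>
    have hset : ts.set i a = ts := List.ext_getElem? fun j => by
      rcases eq_or_ne i j with rfl | hij
      · simp [List.getElem?_set_self', hget]
      · simp [List.getElem?_set_ne hij]
    simpa [hset] using ReplaceAt.there (f := f) hget ih

theorem SubtermAt.exists_replaceAt {s u : Term F} {p : List Nat} (h : SubtermAt s p u)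
    (v : Term F) : ∃ t, ReplaceAt s p v t := by
  induction h with
  | here => exact ⟨v, .here _ _⟩
  | there hget _ ih =>
    obtain ⟨w, hw⟩ := ih
    exact ⟨_, .there hget hw⟩

theorem SubtermAt.exists_replaceAt_append {s u u' v : Term F} {p q : List Nat}
    (hs : SubtermAt s p u) (hr : ReplaceAt u q v u') :
    ∃ s', ReplaceAt s (p ++ q) v s' ∧ ReplaceAt s p u' s' := by
  induction hs generalizing u' with
  | here => exact ⟨u', hr, .here _ _⟩
  | there hget _ ih =>
    obtain ⟨s', h₁, h₂⟩ := ih hr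
    exact ⟨_, .there hget h₁, .there hget h₂⟩

end Positions

section Rewriting

variable {R : TRS F}

theorem OneStep.exists_of_subtermAt {s u v : Term F} {p : List Nat} (hs : SubtermAt s p u)
    (h : OneStep R u v) : ∃ t, OneStep R s t ∧ ReplaceAt s p v t := by
  obtain ⟨ρ, hρ, σ, q, hsub, hrep⟩ := h
  obtain ⟨t, h₁, h₂⟩ := hs.exists_replaceAt_append hrep
  exact ⟨t, ⟨ρ, hρ, σ, p ++ q, hs.trans hsub, h₁⟩, h₂⟩

theorem StarRW.replaceAt {u v : Term F} (h : StarRW R u v) {s t : Term F} {p : List Nat}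
    (hs : SubtermAt s p u) (ht : ReplaceAt s p v t) : StarRW R s t := by
  induction h using Relation.ReflTransGen.head_induction_on generalizing s with
  | refl => exact (ht.unique hs.replaceAt_self) ▸ .refl
  | head hstep _ ih =>
    obtain ⟨s₁, h₁, h₂⟩ := OneStep.exists_of_subtermAt hs hstep
    exact .head h₁ (ih h₂.subtermAt (h₂.replaceAt_of_replaceAt ht))

theorem OneStep.subst {u v : Term F} (h : OneStep R u v) (σ : Nat → Term F) :
    OneStep R (u.subst σ) (v.subst σ) := by
  obtain ⟨ρ, hρ, τ, p, hsub, hrep⟩ := h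
  refine ⟨ρ, hρ, fun n => (τ n).subst σ, p, ?_, ?_⟩
  · simpa [Term.subst_subst] using hsub.subst σ
  · simpa [Term.subst_subst] using hrep.subst σ

theorem StarRW.subst {u v : Term F} (h : StarRW R u v) (σ : Nat → Term F) :
    StarRW R (u.subst σ) (v.subst σ) := by
  induction h with
  | refl => exact .refl
  | tail _ hstep ih => exact ih.tail (hstep.subst σ)

theorem NormalForm.of_subtermAt {t u : Term F} {p : List Nat} (ht : NormalForm R t)
    (hu : SubtermAt t p u) : NormalForm R u := fun _ hstep =>
  let ⟨_, hstep', _⟩ := OneStep.exists_of_subtermAt hu hstep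
  ht _ hstep'

theorem NormalForm.eq_of_starRW {n u : Term F} (hn : NormalForm R n) (h : StarRW R n u) :
    n = u := by
  rcases h.cases_head with h | ⟨c, hc, _⟩
  · exact h
  · exact absurd hc (hn c)

theorem Terminating.exists_nfOf (hT : Terminating R) (s : Term F) : ∃ n, NFof R s n := by
  induction s using hT.induction with
  | _ s ih =>
    by_cases hs : NormalForm R s
    · exact ⟨s, .refl, hs⟩
    · obtain ⟨u, hu⟩ := not_forall_not.mp hs
      obtain ⟨n, h₁, h₂⟩ := ih u hu
      exact ⟨n, .head hu h₁, h₂⟩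

theorem Confluent.nfOf_unique (hc : Confluent R) {s n m : Term F}
    (hn : NFof R s n) (hm : NFof R s m) : n = m := by
  obtain ⟨v, hnv, hmv⟩ := hc s n m hn.1 hm.1
  rw [hn.2.eq_of_starRW hnv, hm.2.eq_of_starRW hmv]

theorem confluent_of_nfOf_unique (hT : Terminating R)
    (huniq : ∀ s n m, NFof R s n → NFof R s m → n = m) : Confluent R := by
  intro s t u hst hsu
  obtain ⟨t', ht'⟩ := hT.exists_nfOf t
  obtain ⟨u', hu'⟩ := hT.exists_nfOf u
  have : t' = u' := huniq s t' u' ⟨hst.trans ht'.1, ht'.2⟩ ⟨hsu.trans hu'.1, hu'.2⟩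
  exact ⟨t', ht'.1, this ▸ hu'.1⟩

end Rewriting

section RightReduce

variable {R : TRS F}

def rightReduce (R : TRS F) : TRS F := { e | ∃ r : Term F, (e.1, r) ∈ R ∧ NFof R r e.2 }

theorem OneStep.rightReduce_plus {s t : Term F} (h : OneStep (rightReduce R) s t) :
    Plus R s t := by
  obtain ⟨⟨l, r'⟩, ⟨r, hr, hrr'⟩, σ, p, hsub, hrep⟩ := h
  obtain ⟨t₁, hrep₁⟩ := hsub.exists_replaceAt (r.subst σ)
  have hstep : OneStep R s t₁ := ⟨(l, r), hr, σ, p, hsub, hrep₁⟩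
  exact .head' hstep <|
    (hrr'.1.subst σ).replaceAt hrep₁.subtermAt (hrep₁.replaceAt_of_replaceAt hrep)

theorem StarRW.of_rightReduce {s t : Term F} (h : StarRW (rightReduce R) s t) :
    StarRW R s t := by
  induction h with
  | refl => exact .refl
  | tail _ hstep ih => exact ih.trans hstep.rightReduce_plus.to_reflTransGen

theorem terminating_rightReduce (hT : Terminating R) : Terminating (rightReduce R) :=
  Subrelation.wf (fun h => Relation.transGen_swap.mpr h.rightReduce_plus) hT.transGen

theorem normalForm_rightReduce_iff (hT : Terminating R) {t : Term F} :
    NormalForm (rightReduce R) t ↔ NormalForm R t := by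
  refine ⟨fun h u ⟨⟨l, r⟩, hlr, σ, p, hsub, _⟩ => ?_, fun h u hu => ?_⟩
  · obtain ⟨r', hr'⟩ := hT.exists_nfOf r
    obtain ⟨t', ht'⟩ := hsub.exists_replaceAt (r'.subst σ)
    exact h t' ⟨(l, r'), ⟨r, hlr, hr'⟩, σ, p, hsub, ht'⟩
  · obtain ⟨c, hc, _⟩ := Relation.TransGen.head'_iff.mp hu.rightReduce_plus
    exact h c hc

theorem nfOf_rightReduce_iff (hconv : Convergent R) {s n : Term F} :
    NFof (rightReduce R) s n ↔ NFof R s n := by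
  have hnf {t : Term F} := normalForm_rightReduce_iff hconv.2 (t := t)
  refine ⟨fun h => ⟨h.1.of_rightReduce, hnf.mp h.2⟩, fun h => ?_⟩
  obtain ⟨n', hn'⟩ := (terminating_rightReduce hconv.2).exists_nfOf s
  obtain rfl : n = n' := hconv.1.nfOf_unique h ⟨hn'.1.of_rightReduce, hnf.mp hn'.2⟩
  exact hn'

theorem convergent_rightReduce (hconv : Convergent R) : Convergent (rightReduce R) :=
  ⟨confluent_of_nfOf_unique (terminating_rightReduce hconv.2) fun _ _ _ hn hm =>
      hconv.1.nfOf_unique ((nfOf_rightReduce_iff hconv).mp hn)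
        ((nfOf_rightReduce_iff hconv).mp hm),
    terminating_rightReduce hconv.2⟩

theorem conv_rightReduce_iff (hconv : Convergent R) {s t : Term F} :
    Conv (rightReduce R) s t ↔ Conv R s t := by
  have hRdR : OneStep (rightReduce R) ≤ Conv R := fun a b hab =>
    Relation.EqvGen.transGen_le_eqvGen _ a b hab.rightReduce_plus
  -- the two sides of an `R`-step share their `R`-normal form, which `R↓` reaches from both
  have hRRd : OneStep R ≤ Conv (rightReduce R) := fun a b hab => by
    obtain ⟨n, hbn⟩ := hconv.2.exists_nfOf b
    have reach {x : Term F} (hx : NFof R x n) : Conv (rightReduce R) x n :=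
      Relation.EqvGen.reflTransGen_le_eqvGen _ _ _ ((nfOf_rightReduce_iff hconv).mpr hx).1
    exact .trans _ _ _ (reach ⟨.head hab hbn.1, hbn.2⟩) (.symm _ _ (reach hbn))
  exact ⟨Relation.EqvGen.eqvGen_le (r' := Relation.EqvGen (OneStep R)) hRdR s t,
    Relation.EqvGen.eqvGen_le (r' := Relation.EqvGen (OneStep (rightReduce R))) hRRd s t⟩

theorem fcClosed_rightReduce (hconv : Convergent R) (hfc : FCclosed R) :
    FCclosed (rightReduce R) := by
  intro t ⟨hirr, hred⟩ u hu
  have hinner : InnermostRedex R t :=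
    ⟨fun p v hv hp => (normalForm_rightReduce_iff hconv.2).mp (hirr p v hv hp),
      fun h => hred ((normalForm_rightReduce_iff hconv.2).mpr h)⟩
  have htu := (nfOf_rightReduce_iff hconv).mp hu
  obtain ⟨⟨l, r⟩, hlr, σ, p, hsub, hrep⟩ := hfc t hinner u htu
  obtain ⟨r', hr'⟩ := hconv.2.exists_nfOf r
  have hrσ : r.subst σ = r'.subst σ :=
    (htu.2.of_subtermAt hrep.subtermAt).eq_of_starRW (hr'.1.subst σ)
  exact ⟨(l, r'), ⟨r, hlr, hr'⟩, σ, p, hsub, hrσ ▸ hrep⟩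

end RightReduce

/-- right-reducing a convergent forward-closed system preserves
convergence, the generated congruence, and forward-closure. -/
theorem right_reduce_preserves {F : Type} (R : TRS F)
    (hconv : Convergent R) (hfc : FCclosed R)
    (Rd : TRS F) (hRd : Rd = { e | ∃ r : Term F, (e.1, r) ∈ R ∧ NFof R r e.2 }) :
    Convergent Rd ∧ (∀ s t, Conv Rd s t ↔ Conv R s t) ∧ FCclosed Rd := by
  obtain rfl : Rd = rightReduce R := hRd
  exact ⟨convergent_rightReduce hconv, fun _ _ => conv_rightReduce_iff hconv,
    fcClosed_rightReduce hconv hfc⟩
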